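/- Let b be an odd prime and h, t integers coprime to b. Then ω_{h,b}/ω_{th,b}^t = (h/b)·(th/b)^t · e^{πi(1-t)(b-1)/4} · e^{(2πi/b)·(1/24)(1-t²)(1-b²)h}, where ω_{h,k} = exp(πi·s(h,k)) with s(h,k) the Dedekind sum, and (·/b) the Legendre symbol. -/

import Mathlib

open Complex Real

open scoped Classical in
/-- The sawtooth function `((x))`. -/
noncomputable def saw (x : ℝ) : ℝ :=
  if (⌊x⌋ : ℝ) = x then 0 else x - ⌊x⌋ - 1 / 2

/-- The Dedekind sum `s(h,k) = ∑_{μ mod k} ((μ/k))((hμ/k))`. -/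
noncomputable def dedekindSum (h : ℤ) (k : ℕ) : ℝ :=
  ∑ μ ∈ Finset.range k, saw ((μ : ℝ) / k) * saw ((h : ℝ) * μ / k)

/-- `ω_{h,k} = exp(πi·s(h,k))`. -/
noncomputable def dedekindOmega (h : ℤ) (k : ℕ) : ℂ :=
  Complex.exp (π * I * dedekindSum h k)

/-!
Write `S(h) = ∑_{μ<b} μ·(hμ mod b)`. For `h` prime to `b`, `s(h,b) = S(h)/b² - (b-1)/4`, since
`μ ↦ hμ mod b` permutes the residues. Pairing `μ` with `b - μ` and comparing with Gauss's lemma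
gives `(h/b) = (-1)^(S(h) + (b-1)/2)`. Expanding `∑ (hμ - (hμ mod b))² ≡ 0 mod b²` gives
`2h·S(h) ≡ (h²+1)·∑ μ² mod b²`; applied to `h` and `th` this shows that
`(S(h) - t·S(th))(1 - b²) - 2chb`, with `24c = (1-t²)(1-b²)`, is divisible by `2b²`, which is
exactly the statement that the exponents of the two sides differ by an integer multiple of `2πi`.
-/

open Finset

theorem sum_range_two_mul_add_one {M : Type*} [AddCommMonoid M] (f : ℕ → M) (m : ℕ) :
    ∑ i ∈ range (2 * m + 1), f i = f 0 + ∑ i ∈ Ico 1 (m + 1), (f i + f (2 * m + 1 - i)) := by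
  rw [sum_range_succ', add_comm, sum_Ico_eq_sum_range, add_tsub_cancel_right, sum_add_distrib,
    two_mul, sum_range_add, ← sum_range_reflect (fun i => f (m + i + 1)) m]
  congr 2 <;> refine sum_congr rfl fun i hi => congrArg f ?_ <;> grind

theorem six_mul_sum_range_sq (n : ℕ) :
    6 * ∑ μ ∈ range n, (μ : ℤ) ^ 2 = n * (n - 1) * (2 * n - 1) := by
  induction n with
  | zero => simp
  | succ n ih =>
    rw [sum_range_succ, mul_add, ih]
    push_cast
    ring

theorem twentyfour_dvd_one_sub_sq_mul_one_sub_sq {t b : ℤ} (hb : Odd b) (htb : IsCoprime t b) :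
    24 ∣ (1 - t ^ 2) * (1 - b ^ 2) := by
  have h8 : 8 ∣ 1 - b ^ 2 := by
    rw [← neg_sub]
    exact (Int.eight_dvd_sq_sub_one_of_odd hb).neg_right
  have hsq3 : ∀ x : ℤ, ¬ 3 ∣ x → 3 ∣ 1 - x ^ 2 := by
    intro x hx
    rcases (by omega : x % 3 = 1 ∨ x % 3 = 2) with hx | hx <;>
      simp [Int.dvd_iff_emod_eq_zero, Int.sub_emod, pow_two, Int.mul_emod, hx]
  have h3 : 3 ∣ (1 - t ^ 2) * (1 - b ^ 2) := by
    by_cases ht : 3 ∣ t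
    · have hb3 : ¬ 3 ∣ b := fun hb3 => by
        have := Int.isUnit_iff.1 (htb.isUnit_of_dvd' ht hb3)
        omega
      exact (hsq3 b hb3).mul_left _
    · exact (hsq3 t ht).mul_right _
  have := h8.mul_left (1 - t ^ 2)
  omega

def residueSum (k : ℕ) (a : ZMod k) : ℕ := ∑ μ ∈ range k, μ * (a * μ).val

section

variable {k : ℕ} [NeZero k]

theorem saw_intCast_div {n : ℤ} (hn : (n : ZMod k) ≠ 0) :
    saw (n / k) = (n : ZMod k).val / k - 1 / 2 := by
  have hfract : Int.fract ((n : ℝ) / k) = (n : ZMod k).val / k := by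
    rw [Int.fract_div_intCast_eq_div_intCast_mod, ← ZMod.val_intCast]; push_cast; rfl
  have hnot : (⌊(n : ℝ) / k⌋ : ℝ) ≠ n / k := by
    rw [Ne, eq_comm, ← sub_eq_zero, Int.self_sub_floor, hfract]
    simp only [div_eq_zero_iff, Nat.cast_eq_zero, ZMod.val_eq_zero, hn, NeZero.ne k, or_self,
      not_false_eq_true]
  rw [saw, if_neg hnot, ← hfract, Int.fract]

theorem sum_range_val_mul {M : Type*} [AddCommMonoid M] {a : ZMod k} (ha : IsUnit a)
    (f : ℕ → M) : ∑ μ ∈ range k, f (a * μ).val = ∑ μ ∈ range k, f μ := by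
  refine sum_nbij' (fun μ => (a * μ).val) (fun μ => (a⁻¹ * μ).val) ?_ ?_ ?_ ?_ fun _ _ => rfl
  · simp [ZMod.val_lt]
  · simp [ZMod.val_lt]
  · intro μ hμ
    simp [← mul_assoc, ZMod.inv_mul_of_unit a ha, ZMod.val_natCast_of_lt (mem_range.1 hμ)]
  · intro μ hμ
    simp [← mul_assoc, ZMod.mul_inv_of_unit a ha, ZMod.val_natCast_of_lt (mem_range.1 hμ)]

theorem dedekindSum_eq_residueSum {h : ℤ} (hh : IsUnit (h : ZMod k)) :
    dedekindSum h k = residueSum k h / k ^ 2 - (k - 1) / 4 := by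
  have hk : (k : ℝ) ≠ 0 := NeZero.ne _
  have hterm : ∀ μ ∈ range k, saw (μ / k) * saw (h * μ / k) =
      (μ / k - 1 / 2) * (((h : ZMod k) * μ).val / k - 1 / 2) - if μ = 0 then 1 / 4 else 0 := by
    intro μ hμ
    rcases eq_or_ne μ 0 with rfl | hμ0
    · norm_num [saw]
    have hμ' : (μ : ZMod k) ≠ 0 := by
      rw [Ne, ZMod.natCast_eq_zero_iff]
      exact fun H => hμ0 (Nat.eq_zero_of_dvd_of_lt H (mem_range.1 hμ))
    have h1 := saw_intCast_div (k := k) (n := μ) (by exact_mod_cast hμ')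
    have h2 := saw_intCast_div (k := k) (n := h * μ)
      (by push_cast; exact hh.mul_right_eq_zero.not.2 hμ')
    push_cast at h1 h2
    rw [h1, h2, ZMod.val_natCast_of_lt (mem_range.1 hμ), if_neg hμ0, sub_zero]
  have hid : ∑ μ ∈ range k, (μ : ℝ) = k * (k - 1) / 2 := by
    have := congrArg (Nat.cast : ℕ → ℝ) (sum_range_id_mul_two k)
    push_cast [Nat.cast_sub (NeZero.one_le : 1 ≤ k)] at this
    linarith
  have hperm : ∑ μ ∈ range k, (((h : ZMod k) * μ).val : ℝ) = ∑ μ ∈ range k, (μ : ℝ) :=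
    sum_range_val_mul hh _
  have hexpand : ∀ μ ∈ range k,
      ((μ : ℝ) / k - 1 / 2) * (((h : ZMod k) * μ).val / k - 1 / 2) =
        (μ * ((h : ZMod k) * μ).val : ℕ) / k ^ 2 - (μ + ((h : ZMod k) * μ).val) / (2 * k)
          + 1 / 4 := by
    intro μ _
    push_cast
    field_simp
    ring
  rw [dedekindSum, sum_congr rfl hterm, sum_sub_distrib, sum_ite_eq',
    if_pos (mem_range.2 (NeZero.pos k)), sum_congr rfl hexpand, sum_add_distrib, sum_sub_distrib,
    ← sum_div, ← sum_div, sum_add_distrib, hperm, hid, residueSum, Nat.cast_sum, sum_const,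
    card_range, nsmul_eq_mul]
  field_simp
  ring

theorem dedekindOmega_eq_exp_residueSum {h : ℤ} (hh : IsUnit (h : ZMod k)) :
    dedekindOmega h k = Complex.exp (π * I * (residueSum k h / k ^ 2 - (k - 1) / 4)) := by
  rw [dedekindOmega, dedekindSum_eq_residueSum hh]
  push_cast
  rfl

theorem sq_dvd_two_mul_residueSum_sub {h : ℤ} (hh : IsUnit (h : ZMod k)) :
    (k : ℤ) ^ 2 ∣ 2 * h * residueSum k h - (h ^ 2 + 1) * ∑ μ ∈ range k, (μ : ℤ) ^ 2 := by
  have hdvd : ∀ μ : ℕ, (k : ℤ) ∣ h * μ - ((h : ZMod k) * μ).val := by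
    intro μ
    rw [← ZMod.intCast_zmod_eq_zero_iff_dvd]
    push_cast
    rw [ZMod.natCast_zmod_val, sub_self]
  have hsq : ∑ μ ∈ range k, (((h : ZMod k) * μ).val : ℤ) ^ 2 = ∑ μ ∈ range k, (μ : ℤ) ^ 2 :=
    sum_range_val_mul hh fun n => (n : ℤ) ^ 2
  have hexpand : ∑ μ ∈ range k, (h * μ - ((h : ZMod k) * μ).val) ^ 2 =
      (h ^ 2 + 1) * ∑ μ ∈ range k, (μ : ℤ) ^ 2 - 2 * h * residueSum k h := by
    calc ∑ μ ∈ range k, (h * μ - ((h : ZMod k) * μ).val) ^ 2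
        = ∑ μ ∈ range k, (h ^ 2 * (μ : ℤ) ^ 2 + (((h : ZMod k) * μ).val : ℤ) ^ 2
            - 2 * h * (μ * ((h : ZMod k) * μ).val : ℕ)) :=
          sum_congr rfl fun μ _ => by push_cast; ring
      _ = _ := by
          rw [sum_sub_distrib, sum_add_distrib, ← mul_sum, ← mul_sum, hsq, residueSum,
            Nat.cast_sum]
          ring
  rw [← neg_sub, ← hexpand]
  exact (dvd_sum fun μ _ => pow_dvd_pow_of_dvd (hdvd μ) 2).neg_right

theorem sq_dvd_residueSum_sub_mul_residueSum (hk : Odd k) {h t c : ℤ} (hh : IsCoprime h k)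
    (ht : IsCoprime t k) (hc : 24 * c = (1 - t ^ 2) * (1 - k ^ 2)) :
    (k : ℤ) ^ 2 ∣ residueSum k h - t * residueSum k (t * h : ℤ) - 2 * c * h * k := by
  obtain ⟨m, hm⟩ := hk
  have hkm : (k : ℤ) = 2 * m + 1 := by exact_mod_cast hm
  have hS₁ := sq_dvd_two_mul_residueSum_sub (ZMod.unitOfIsCoprime h hh).isUnit
  have hS₂ := sq_dvd_two_mul_residueSum_sub (ZMod.unitOfIsCoprime _ (ht.mul_left hh)).isUnit
  set Q := ∑ μ ∈ range k, (μ : ℤ) ^ 2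
  have hQ : (1 - t ^ 2) * Q - 4 * c * k = k ^ 2 * m * (1 - t ^ 2) := by
    refine mul_left_cancel₀ (by norm_num : (6 : ℤ) ≠ 0) ?_
    have h6 := six_mul_sum_range_sq k
    rw [hkm] at hc h6 ⊢
    linear_combination (1 - t ^ 2) * h6 - (2 * m + 1 : ℤ) * hc
  have hcop : IsCoprime ((k : ℤ) ^ 2) (2 * (t * h)) :=
    (IsCoprime.mul_right ⟨1, -(m : ℤ), by rw [hkm]; ring⟩ (ht.symm.mul_right hh.symm)).pow_left
  refine hcop.dvd_of_dvd_mul_left ?_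
  have key : 2 * (t * h) * (residueSum k h - t * residueSum k (t * h : ℤ) - 2 * c * h * k) =
      t * (2 * h * residueSum k h - (h ^ 2 + 1) * Q)
        - t * (2 * (t * h) * residueSum k (t * h : ℤ) - ((t * h) ^ 2 + 1) * Q)
        + k ^ 2 * (t * h ^ 2 * m * (1 - t ^ 2)) := by
    linear_combination (t * h ^ 2) * hQ
  rw [key]
  exact dvd_add (dvd_sub (hS₁.mul_left t) (hS₂.mul_left t)) (Dvd.intro _ rfl)

theorem two_mul_sq_dvd_residueSum_sub_mul_residueSum (hk : Odd k) {h t c : ℤ}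
    (hh : IsCoprime h k) (ht : IsCoprime t k) (hc : 24 * c = (1 - t ^ 2) * (1 - k ^ 2)) :
    2 * (k : ℤ) ^ 2 ∣
      (residueSum k h - t * residueSum k (t * h : ℤ)) * (1 - k ^ 2) - 2 * c * h * k := by
  have hk2 : IsCoprime (2 : ℤ) ((k : ℤ) ^ 2) := by
    exact_mod_cast (Nat.isCoprime_iff_coprime.2 (Nat.coprime_two_left.2 hk)).pow_right
  refine hk2.mul_dvd ?_ ?_
  · have heven : Even (1 - (k : ℤ) ^ 2) := odd_one.sub_odd hk.natCast.pow
    exact dvd_sub (heven.two_dvd.mul_left _) ⟨c * h * k, by ring⟩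
  · rw [show ∀ x y : ℤ, x * (1 - k ^ 2) - y = (x - y) - k ^ 2 * x from fun _ _ => by ring]
    exact dvd_sub (sq_dvd_residueSum_sub_mul_residueSum hk hh ht hc) (dvd_mul_right _ _)

end

section

variable {p : ℕ} [Fact p.Prime]

theorem residueSum_cast_zmod_two (hp : p ≠ 2) {a : ZMod p} (ha : a ≠ 0) :
    (residueSum p a : ZMod 2) = ∑ μ ∈ Ico 1 (p / 2 + 1), (1 + μ + (a * μ).val : ZMod 2) := by
  have hodd : Odd p := (Fact.out : p.Prime).odd_of_ne_two hp
  have hp2 : p = 2 * (p / 2) + 1 := (Nat.two_mul_div_two_add_one_of_odd hodd).symm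
  have hpairs : ∀ x y : ZMod 2, x * y + (1 - x) * (1 - y) = 1 + x + y := by decide
  rw [residueSum, show range p = range (2 * (p / 2) + 1) by rw [← hp2], sum_range_two_mul_add_one,
    ← hp2, zero_mul, zero_add, Nat.cast_sum]
  refine sum_congr rfl fun μ hμ => ?_
  have hμp : μ < p := by grind
  have hμ0 : (μ : ZMod p) ≠ 0 := by
    rw [Ne, ← ZMod.val_eq_zero, ZMod.val_natCast_of_lt hμp]; grind
  have hreflect : (a * ((p - μ : ℕ) : ZMod p)).val = p - (a * μ).val := by
    rw [Nat.cast_sub hμp.le, ZMod.natCast_self, zero_sub, mul_neg, ZMod.neg_val,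
      if_neg (mul_ne_zero ha hμ0)]
  rw [hreflect]
  push_cast [Nat.cast_sub hμp.le, Nat.cast_sub (ZMod.val_le (a * (μ : ZMod p))),
    ZMod.natCast_eq_one_iff_odd.2 hodd]
  exact hpairs _ _

theorem sum_val_mul_cast_zmod_two (hp : p ≠ 2) {a : ZMod p} (ha : a ≠ 0) :
    ∑ μ ∈ Ico 1 (p / 2 + 1), ((a * (μ : ℕ)).val : ZMod 2) =
      ∑ μ ∈ Ico 1 (p / 2 + 1), (μ : ZMod 2) +
        #{μ ∈ Ico 1 (p / 2 + 1) | p / 2 < (a * (μ : ℕ)).val} := by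
  have hodd : Odd p := (Fact.out : p.Prime).odd_of_ne_two hp
  have hflip : ∀ x : ZMod 2, 1 - x + 1 = x := by decide
  have hmin : ∀ x : ZMod p,
      (x.val : ZMod 2) = x.valMinAbs.natAbs + if p / 2 < x.val then 1 else 0 := by
    intro x
    rw [ZMod.valMinAbs_def_pos]
    split_ifs with hle hlt hlt
    · omega
    · simp
    · rw [show ((x.val : ℤ) - p).natAbs = p - x.val by have := ZMod.val_lt x; omega]
      push_cast [Nat.cast_sub (ZMod.val_le x), ZMod.natCast_eq_one_iff_odd.2 hodd]
      exact (hflip _).symm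
    · omega
  have hgauss :
      ∑ μ ∈ Ico 1 (p / 2 + 1), (a * μ).valMinAbs.natAbs = ∑ μ ∈ Ico 1 (p / 2 + 1), μ := by
    simpa only [sum_eq_multiset_sum] using
      congrArg Multiset.sum (ZMod.Ico_map_valMinAbs_natAbs_eq_Ico_map_id p a ha)
  rw [sum_congr rfl fun (μ : ℕ) _ => hmin (a * μ), sum_add_distrib, ← Nat.cast_sum, hgauss,
    card_filter, Nat.cast_sum]
  simp

theorem legendreSym_eq_neg_one_pow_residueSum (hp : p ≠ 2) {a : ℤ} (ha : (a : ZMod p) ≠ 0) :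
    legendreSym p a = (-1) ^ (residueSum p a + p / 2) := by
  rw [ZMod.gauss_lemma hp ha, neg_one_pow_eq_pow_mod_two,
    neg_one_pow_eq_pow_mod_two (n := residueSum p a + p / 2)]
  congr 1
  rw [← ZMod.natCast_eq_natCast_iff', Nat.cast_add, residueSum_cast_zmod_two hp ha,
    sum_add_distrib, sum_add_distrib, sum_val_mul_cast_zmod_two hp ha, sum_const, Nat.card_Ico,
    Nat.add_sub_cancel]
  have htwo : (2 : ZMod 2) = 0 := rfl
  linear_combination -(((p / 2 : ℕ) : ZMod 2) + ∑ μ ∈ Ico 1 (p / 2 + 1), (μ : ZMod 2)) * htwo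

theorem legendreSym_eq_exp_residueSum (hp : p ≠ 2) {a : ℤ} (ha : (a : ZMod p) ≠ 0) :
    (legendreSym p a : ℂ) = Complex.exp (π * I * (residueSum p a + p / 2 : ℕ)) := by
  rw [legendreSym_eq_neg_one_pow_residueSum hp ha, Int.cast_pow, Int.cast_neg, Int.cast_one,
    ← Complex.exp_pi_mul_I, ← Complex.exp_nat_mul, mul_comm]

end

/-- `ω_{h,b}/ω_{th,b}^t = (h/b)(th/b)^t e^{πi(1-t)(b-1)/4} e^{(2πi/b)(1/24)(1-t²)(1-b²)h}`
for `b` an odd prime and `h, t` coprime to `b`. -/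
theorem dedekind_omega_quotient (b : ℕ) [Fact b.Prime] (hb : b ≠ 2) (h t : ℤ)
    (hh : IsCoprime h (b : ℤ)) (htb : IsCoprime t (b : ℤ)) :
    dedekindOmega h b / (dedekindOmega (t * h) b) ^ t
      = (legendreSym b h : ℂ) * (legendreSym b (t * h) : ℂ) ^ t
        * Complex.exp (π * I * (1 - t) * (b - 1) / 4)
        * Complex.exp (2 * π * I / b
            * ((1 - (t : ℂ) ^ 2) * (1 - (b : ℂ) ^ 2) / 24) * h) := by
  have hodd : Odd b := (Fact.out : b.Prime).odd_of_ne_two hb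
  have hth : IsCoprime (t * h) b := htb.mul_left hh
  have hunit : ∀ {a : ℤ}, IsCoprime a b → IsUnit (a : ZMod b) :=
    fun ha => (ZMod.unitOfIsCoprime _ ha).isUnit
  obtain ⟨c, hc⟩ := twentyfour_dvd_one_sub_sq_mul_one_sub_sq hodd.natCast htb
  obtain ⟨N, hN⟩ := two_mul_sq_dvd_residueSum_sub_mul_residueSum hodd hh htb hc.symm
  rw [dedekindOmega_eq_exp_residueSum (hunit hh), dedekindOmega_eq_exp_residueSum (hunit hth),
    legendreSym_eq_exp_residueSum hb (hunit hh).ne_zero,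
    legendreSym_eq_exp_residueSum hb (hunit hth).ne_zero,
    ← Complex.exp_int_mul, ← Complex.exp_int_mul, ← Complex.exp_sub, ← Complex.exp_add,
    ← Complex.exp_add, ← Complex.exp_add, Complex.exp_eq_exp_iff_exists_int]
  set S₁ := residueSum b h
  set S₂ := residueSum b (t * h : ℤ)
  set m := b / 2
  have hm : 2 * (m : ℂ) = b - 1 := by
    rw [← Nat.two_mul_div_two_add_one_of_odd hodd]; push_cast; ring
  have hcC : (1 - (t : ℂ) ^ 2) * (1 - (b : ℂ) ^ 2) / 24 = c := by
    rw [div_eq_iff (by norm_num)]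
    exact_mod_cast hc.trans (mul_comm _ _)
  have hbC : (b : ℂ) ≠ 0 := NeZero.ne _
  have key : ((S₁ : ℂ) - t * S₂) / b ^ 2 = S₁ + t * S₂ + 2 * c * h / b + 2 * (N - t * S₂) := by
    have hNC : ((S₁ : ℂ) - t * S₂) * (1 - b ^ 2) - 2 * c * h * b = 2 * b ^ 2 * N := by
      exact_mod_cast hN
    field_simp
    linear_combination hNC
  refine ⟨N - t * S₂ - m, ?_⟩
  push_cast
  rw [hcC]
  linear_combination (π * I) * key + (π * I * (1 - t) / 2) * hm
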